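/- The variational identity implies the AP differential identity: let λ_{iμ} be a continuously differentiable tetrad on ℝⁿ, b a real parameter, E^μ_ν a differentiable mixed tensor field, and define J_i^μ := −E^μ_α λ_i^α. Suppose that at every point and for every ν the identity E^μ_{ν∥⁻μ} + λ_{iμ∥⁺ν} J_i^μ = 0 holds (summation over i and μ), where E^μ_{ν∥⁻μ} := ∂_μ E^μ_ν − E^μ_α ∇^α_{μν} + E^α_ν ∇^μ_{μα} and λ_{iμ∥⁺ν} := ∂_ν λ_{iμ} − λ_{iα} ∇^α_{μν}. Then at every point and for every ν one has E^μ_{ν|⁻μ} := ∂_μ E^μ_ν − E^μ_α Γ^α_{μν} + E^α_ν Γ^μ_{μα} = 0, i.e., the contracted covariant derivative of E with respect to the dual of the Weitzenböck connection vanishes identically. -/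

import Mathlib

open scoped BigOperators

noncomputable section

/-- A point of ℝⁿ. -/
abbrev Pt (n : ℕ) := Fin n → ℝ
/-- A field of doubly-indexed components, e.g. a metric `g x μ ν` or a mixed tensor `E x μ ν`. -/
abbrev Tensor2 (n : ℕ) := Pt n → Fin n → Fin n → ℝ
/-- A field of connection coefficients `N x α μ ν = N^α_{μν}`. -/
abbrev Conn (n : ℕ) := Pt n → Fin n → Fin n → Fin n → ℝ

/-- Partial derivative `∂_μ f` at `x`. -/
noncomputable def pd {n : ℕ} (f : Pt n → ℝ) (μ : Fin n) (x : Pt n) : ℝ :=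
  fderiv ℝ f x (Pi.single μ 1)

/-- Christoffel symbols `{^α_{μν}} = (1/2) g^{ασ}(∂_ν g_{μσ} + ∂_μ g_{νσ} − ∂_σ g_{μν})`. -/
noncomputable def christoffel {n : ℕ} (g ginv : Tensor2 n) : Conn n := fun x α μ ν =>
  (1/2) * ∑ σ, ginv x α σ *
    (pd (fun y => g y μ σ) ν x + pd (fun y => g y ν σ) μ x - pd (fun y => g y μ ν) σ x)

/-- Contracted covariant derivative of `E` with respect to the dual (transposed) connection of `N`:
`E^μ_{ν∘μ} = ∂_μ E^μ_ν − E^μ_α N^α_{μν} + E^α_ν N^μ_{μα}` (summed over `μ` and `α`). -/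
noncomputable def covDivDual {n : ℕ} (N : Conn n) (E : Tensor2 n) (ν : Fin n) (x : Pt n) : ℝ :=
  (∑ μ, pd (fun y => E y μ ν) μ x)
    - (∑ μ, ∑ α, E x μ α * N x α μ ν)
    + (∑ μ, ∑ α, E x α ν * N x μ μ α)

/-- The metric `g_{μν} = λ_{iμ} λ_{iν}` associated with a tetrad `lam x i μ = λ_{iμ}`. -/
noncomputable def tetMetric {n : ℕ} (lam : Pt n → Fin n → Fin n → ℝ) : Tensor2 n :=
  fun x μ ν => ∑ i, lam x i μ * lam x i ν

/-- The inverse metric `g^{μν} = λ_i^μ λ_i^ν` built from the inverse tetrad `laminv x i μ = λ_i^μ`. -/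
noncomputable def tetMetricInv {n : ℕ} (laminv : Pt n → Fin n → Fin n → ℝ) : Tensor2 n :=
  fun x μ ν => ∑ i, laminv x i μ * laminv x i ν

/-- The Weitzenböck connection `Γ^α_{μν} = λ_i^α ∂_ν λ_{iμ}`. -/
noncomputable def weitzenbock {n : ℕ} (lam laminv : Pt n → Fin n → Fin n → ℝ) : Conn n :=
  fun x α μ ν => ∑ i, laminv x i α * pd (fun y => lam y i μ) ν x

/-- The contortion `γ^α_{μν} = Γ^α_{μν} − {^α_{μν}}`. -/
noncomputable def contortion {n : ℕ} (lam laminv : Pt n → Fin n → Fin n → ℝ) : Conn n :=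
  fun x α μ ν => weitzenbock lam laminv x α μ ν
    - christoffel (tetMetric lam) (tetMetricInv laminv) x α μ ν

/-!
The variational identity contains the Weitzenböck connection only through the tetrad term: since
`λ_{iα} λ_i^β = δ_α^β`, that term equals `E^μ_α (∇^α_{μν} − Γ^α_{μν})`, which replaces `∇` by `Γ` in
the middle term of `E^μ_{ν∥⁻μ}`. The last term involves `∇` only through its trace `∇^μ_{μα}`,
and this trace equals `Γ^μ_{μα}`: the Christoffel trace is `½ g^{μσ} ∂_α g_{μσ}`, which for
`g_{μσ} = λ_{iμ} λ_{iσ}` is `λ_i^μ ∂_α λ_{iμ}`, so the contortion is traceless.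
-/

open Finset

section PartialDerivative

variable {n : ℕ} {x : Pt n}

lemma pd_finset_sum {ι : Type*} (s : Finset ι) (f : ι → Pt n → ℝ) (μ : Fin n)
    (hf : ∀ i ∈ s, DifferentiableAt ℝ (f i) x) :
    pd (fun y => ∑ i ∈ s, f i y) μ x = ∑ i ∈ s, pd (f i) μ x := by
  simp only [pd, fderiv_fun_sum hf, FunLike.coe_sum, Finset.sum_apply]

lemma pd_mul {f g : Pt n → ℝ} (μ : Fin n) (hf : DifferentiableAt ℝ f x)
    (hg : DifferentiableAt ℝ g x) :
    pd (fun y => f y * g y) μ x = pd f μ x * g x + f x * pd g μ x := by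
  simp only [pd, fderiv_fun_mul hf hg, add_apply, smul_apply, smul_eq_mul]
  ring

lemma pd_tetMetric {lam : Pt n → Fin n → Fin n → ℝ}
    (hlam : ∀ i μ, DifferentiableAt ℝ (fun y => lam y i μ) x) (μ σ α : Fin n) :
    pd (fun y => tetMetric lam y μ σ) α x
      = ∑ i, (pd (fun y => lam y i μ) α x * lam x i σ
            + lam x i μ * pd (fun y => lam y i σ) α x) := by
  unfold tetMetric
  rw [pd_finset_sum _ (fun i y => lam y i μ * lam y i σ) _ fun i _ => (hlam i μ).mul (hlam i σ)]
  exact sum_congr rfl fun i _ => pd_mul α (hlam i μ) (hlam i σ)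

end PartialDerivative

section Trace

variable {n : ℕ}

/-- The last two terms of `{^μ_{μα}}` cancel after exchanging `μ` and `σ`. -/
lemma sum_christoffel_diag {g ginv : Tensor2 n} {x : Pt n}
    (hg : ∀ y a c, g y a c = g y c a) (hginv : ∀ a c, ginv x a c = ginv x c a) (α : Fin n) :
    ∑ μ, christoffel g ginv x μ μ α
      = (1 / 2) * ∑ μ, ∑ σ, ginv x μ σ * pd (fun y => g y μ σ) α x := by
  have hcancel : ∑ μ, ∑ σ, ginv x μ σ * pd (fun y => g y α σ) μ x
      = ∑ μ, ∑ σ, ginv x μ σ * pd (fun y => g y μ α) σ x := by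
    rw [sum_comm]
    refine sum_congr rfl fun μ _ => sum_congr rfl fun σ _ => ?_
    rw [hginv σ μ]
    simp only [hg _ α μ]
  simp only [christoffel, ← mul_sum, mul_add, mul_sub, sum_add_distrib, sum_sub_distrib]
  rw [hcancel]
  ring

lemma sum_tetMetricInv_mul_tetrad {lam laminv : Pt n → Fin n → Fin n → ℝ} {x : Pt n}
    (hlam_inv' : ∀ i j, ∑ μ, lam x i μ * laminv x j μ = if i = j then (1 : ℝ) else 0)
    (i μ : Fin n) :
    ∑ σ, tetMetricInv laminv x μ σ * lam x i σ = laminv x i μ := by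
  calc ∑ σ, tetMetricInv laminv x μ σ * lam x i σ
      = ∑ j, laminv x j μ * ∑ σ, lam x i σ * laminv x j σ := by
        simp only [tetMetricInv, sum_mul, mul_sum]
        rw [sum_comm]
        exact sum_congr rfl fun j _ => sum_congr rfl fun σ _ => by ring
    _ = laminv x i μ := by simp [hlam_inv']

lemma sum_christoffel_diag_eq_sum_weitzenbock_diag {lam laminv : Pt n → Fin n → Fin n → ℝ}
    {x : Pt n} (hlam : ∀ i μ, DifferentiableAt ℝ (fun y => lam y i μ) x)
    (hlam_inv' : ∀ i j, ∑ μ, lam x i μ * laminv x j μ = if i = j then (1 : ℝ) else 0)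
    (α : Fin n) :
    ∑ μ, christoffel (tetMetric lam) (tetMetricInv laminv) x μ μ α
      = ∑ μ, weitzenbock lam laminv x μ μ α := by
  have hg : ∀ y a c, tetMetric lam y a c = tetMetric lam y c a :=
    fun y a c => sum_congr rfl fun i _ => mul_comm _ _
  have hsymm : ∀ a c, tetMetricInv laminv x a c = tetMetricInv laminv x c a :=
    fun a c => sum_congr rfl fun i _ => mul_comm _ _
  have hhalf : ∑ μ, ∑ σ, ∑ i, tetMetricInv laminv x μ σ *
        (lam x i μ * pd (fun y => lam y i σ) α x)
      = ∑ μ, ∑ σ, ∑ i, tetMetricInv laminv x μ σ *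
          (pd (fun y => lam y i μ) α x * lam x i σ) := by
    rw [sum_comm]
    refine sum_congr rfl fun μ _ => sum_congr rfl fun σ _ => sum_congr rfl fun i _ => ?_
    rw [hsymm σ μ]
    ring
  have hfirst : ∑ μ, ∑ σ, ∑ i, tetMetricInv laminv x μ σ *
        (pd (fun y => lam y i μ) α x * lam x i σ)
      = ∑ μ, weitzenbock lam laminv x μ μ α := by
    refine sum_congr rfl fun μ _ => ?_
    rw [sum_comm, weitzenbock]
    refine sum_congr rfl fun i _ => ?_
    rw [← sum_tetMetricInv_mul_tetrad hlam_inv' i μ, sum_mul]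
    exact sum_congr rfl fun σ _ => by ring
  rw [sum_christoffel_diag hg hsymm]
  simp only [pd_tetMetric hlam, mul_sum, mul_add, sum_add_distrib, hhalf, hfirst]
  rw [← mul_sum]
  ring

end Trace

section DualDivergence

variable {n : ℕ}

lemma covDivDual_eq_add_of_sum_diag_eq {N M : Conn n} (E : Tensor2 n) (ν : Fin n) {x : Pt n}
    (htrace : ∀ α, ∑ μ, N x μ μ α = ∑ μ, M x μ μ α) :
    covDivDual M E ν x
      = covDivDual N E ν x + ∑ μ, ∑ α, E x μ α * (N x α μ ν - M x α μ ν) := by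
  have hlast : ∑ μ, ∑ α, E x α ν * N x μ μ α = ∑ μ, ∑ α, E x α ν * M x μ μ α := by
    rw [sum_comm, sum_comm (f := fun μ α => E x α ν * M x μ μ α)]
    simp only [← mul_sum, htrace]
  simp only [covDivDual, hlast, mul_sub, sum_sub_distrib]
  ring

lemma sum_tetrad_covDeriv_mul_current {lam laminv : Pt n → Fin n → Fin n → ℝ} {x : Pt n}
    (hlam_inv : ∀ μ ν, ∑ i, lam x i μ * laminv x i ν = if μ = ν then (1 : ℝ) else 0)
    (N : Conn n) (E : Tensor2 n) (ν : Fin n) :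
    ∑ i, ∑ μ, (pd (fun y => lam y i μ) ν x - ∑ α, lam x i α * N x α μ ν)
        * (-∑ α, E x μ α * laminv x i α)
      = ∑ μ, ∑ α, E x μ α * (N x α μ ν - weitzenbock lam laminv x α μ ν) := by
  have hN : ∀ μ, ∑ i, (∑ α, lam x i α * N x α μ ν) * ∑ β, E x μ β * laminv x i β
      = ∑ β, E x μ β * N x β μ ν := by
    intro μ
    calc ∑ i, (∑ α, lam x i α * N x α μ ν) * ∑ β, E x μ β * laminv x i β
        = ∑ α, ∑ β, ∑ i, lam x i α * laminv x i β * (N x α μ ν * E x μ β) := by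
          simp only [sum_mul_sum]
          rw [sum_comm]
          refine sum_congr rfl fun α _ => ?_
          rw [sum_comm]
          exact sum_congr rfl fun β _ => sum_congr rfl fun i _ => by ring
      _ = ∑ β, E x μ β * N x β μ ν := by
          simp only [← sum_mul, hlam_inv, ite_mul, one_mul, zero_mul, sum_ite_eq, mem_univ,
            if_true]
          exact sum_congr rfl fun β _ => mul_comm _ _
  have hΓ : ∀ μ, ∑ i, pd (fun y => lam y i μ) ν x * ∑ β, E x μ β * laminv x i β
      = ∑ β, E x μ β * weitzenbock lam laminv x β μ ν := by
    intro μ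
    simp only [weitzenbock, mul_sum]
    rw [sum_comm]
    exact sum_congr rfl fun β _ => sum_congr rfl fun i _ => by ring
  rw [sum_comm]
  simp only [mul_neg, sub_mul, neg_sub, sum_sub_distrib, hN, hΓ, mul_sub]

end DualDivergence

theorem stmt16_general {n : ℕ}
    (lam laminv : Pt n → Fin n → Fin n → ℝ)
    (hlam_diff : ∀ i μ, ContDiff ℝ 1 (fun x => lam x i μ))
    (hlam_inv : ∀ x μ ν, (∑ i, lam x i μ * laminv x i ν) = if μ = ν then (1:ℝ) else 0)
    (hlam_inv' : ∀ x i j, (∑ μ, lam x i μ * laminv x j μ) = if i = j then (1:ℝ) else 0)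
    (b : ℝ)
    (E : Tensor2 n)
    (hvar : ∀ (x : Pt n) (ν : Fin n),
      covDivDual (fun x α μ ν =>
          christoffel (tetMetric lam) (tetMetricInv laminv) x α μ ν
            + b * contortion lam laminv x α μ ν) E ν x
        + (∑ i, ∑ μ,
            (pd (fun y => lam y i μ) ν x
              - ∑ α, lam x i α *
                  (christoffel (tetMetric lam) (tetMetricInv laminv) x α μ ν
                    + b * contortion lam laminv x α μ ν))
            * (-(∑ α, E x μ α * laminv x i α))) = 0)
 :
    ∀ (x : Pt n) (ν : Fin n),
      covDivDual (weitzenbock lam laminv) E ν x = 0 := by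
  intro x ν
  set N : Conn n := fun x α μ ν =>
    christoffel (tetMetric lam) (tetMetricInv laminv) x α μ ν + b * contortion lam laminv x α μ ν
  have hdiff : ∀ i μ, DifferentiableAt ℝ (fun y => lam y i μ) x :=
    fun i μ => ((hlam_diff i μ).differentiable one_ne_zero).differentiableAt
  have htrace : ∀ α, ∑ μ, N x μ μ α = ∑ μ, weitzenbock lam laminv x μ μ α := by
    intro α
    have hchr := sum_christoffel_diag_eq_sum_weitzenbock_diag hdiff (hlam_inv' x) α
    simp only [N, contortion, sum_add_distrib, ← mul_sum, sum_sub_distrib, hchr]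
    ring
  rw [covDivDual_eq_add_of_sum_diag_eq E ν htrace,
    ← sum_tetrad_covDeriv_mul_current (hlam_inv x) N E ν]
  exact hvar x ν

/-- the variational identity `E^μ_{ν∥⁻μ} + λ_{iμ∥⁺ν} J_i^μ = 0` with
`J_i^μ = −E^μ_α λ_i^α` implies the AP differential identity `E^μ_{ν|⁻μ} = 0`, where `|⁻`
refers to the dual of the Weitzenböck connection. -/
theorem stmt16 {n : ℕ} (hn : 1 ≤ n)
    (lam laminv : Pt n → Fin n → Fin n → ℝ)
    (hlam_diff : ∀ i μ, ContDiff ℝ 1 (fun x => lam x i μ))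
    (hlam_inv : ∀ x μ ν, (∑ i, lam x i μ * laminv x i ν) = if μ = ν then (1:ℝ) else 0)
    (hlam_inv' : ∀ x i j, (∑ μ, lam x i μ * laminv x j μ) = if i = j then (1:ℝ) else 0)
    (b : ℝ)
    (E : Tensor2 n)
    (hE_diff : ∀ μ ν, Differentiable ℝ (fun x => E x μ ν))
    (hvar : ∀ (x : Pt n) (ν : Fin n),
      covDivDual (fun x α μ ν =>
          christoffel (tetMetric lam) (tetMetricInv laminv) x α μ ν
            + b * contortion lam laminv x α μ ν) E ν x
        + (∑ i, ∑ μ,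
            (pd (fun y => lam y i μ) ν x
              - ∑ α, lam x i α *
                  (christoffel (tetMetric lam) (tetMetricInv laminv) x α μ ν
                    + b * contortion lam laminv x α μ ν))
            * (-(∑ α, E x μ α * laminv x i α))) = 0)
 :
    ∀ (x : Pt n) (ν : Fin n),
      covDivDual (weitzenbock lam laminv) E ν x = 0 :=
  stmt16_general lam laminv hlam_diff hlam_inv hlam_inv' b E hvar
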